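/- For a symmetric g×g integer matrix S and a ∈ 𝔽₂^g, the second order theta constant satisfies Θ[a](τ + S) = i^{ᵗaSa} Θ[a](τ) for all τ in the Siegel upper half-space, where ᵗaSa is computed with any integer lifts of a. -/
import Mathlib


open Matrix Complex

variable (g : ℕ)

/-- The second order theta constant Θ[a](τ) = θ[a;0](2τ)
= Σ_{n∈ℤ^g} exp(2πi · ᵗ(n+a/2)·(2τ)·(n+a/2)/2), for a characteristic a ∈ 𝔽₂^g
(using the canonical lift with entries 0, 1). -/
noncomputable def secondOrderTheta (a : Fin g → ZMod 2) (τ : Matrix (Fin g) (Fin g) ℂ) : ℂ :=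
  ∑' n : Fin g → ℤ,
    Complex.exp (2 * Real.pi * Complex.I *
      (((fun i => (n i : ℂ) + ((a i).val : ℂ) / 2) ⬝ᵥ
          (((2 : ℂ) • τ) *ᵥ fun i => (n i : ℂ) + ((a i).val : ℂ) / 2)) / 2))

/-- for a symmetric g×g integer matrix S and a ∈ 𝔽₂^g,
Θ[a](τ + S) = i^{ᵗaSa}·Θ[a](τ) for every τ ∈ ℍ_g, where ᵗaSa is computed with any
integer lift b of a. -/
theorem secondOrderTheta_translation (S : Matrix (Fin g) (Fin g) ℤ) (hS : Sᵀ = S)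
    (a : Fin g → ZMod 2) (b : Fin g → ℤ) (hb : ∀ i, ((b i : ZMod 2)) = a i)
    (τ : Matrix (Fin g) (Fin g) ℂ) (hτsymm : τᵀ = τ)
    (hτpos : (τ.map Complex.im).PosDef) :
    secondOrderTheta g a (τ + S.map (Int.cast : ℤ → ℂ)) =
      Complex.I ^ (b ⬝ᵥ (S *ᵥ b)) * secondOrderTheta g a τ := by
  classical
  have hsym : ∀ x y : Fin g → ℤ, x ⬝ᵥ S *ᵥ y = y ⬝ᵥ S *ᵥ x := by
    intro x y
    rw [dotProduct_mulVec, ← mulVec_transpose, hS, dotProduct_comm]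
  have hexpI : Complex.exp (((Real.pi/2 : ℝ):ℂ) * Complex.I) = Complex.I := by
    rw [Complex.exp_mul_I, ← Complex.ofReal_cos, ← Complex.ofReal_sin,
      Real.cos_pi_div_two, Real.sin_pi_div_two]
    simp
  unfold secondOrderTheta
  rw [← tsum_mul_left]
  refine tsum_congr fun n => ?_
  set v : Fin g → ℂ := fun i => (n i : ℂ) + ((a i).val : ℂ) / 2 with hv
  set m : Fin g → ℤ := fun i => 2 * n i + ((a i).val : ℤ) with hm
  have hv2 : ∀ i, v i = (m i : ℂ) / 2 := by
    intro i
    simp only [hv, hm]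
    push_cast
    ring
  -- lift difference
  have hdvd2 : ∀ i, ∃ t : ℤ, m i = b i + 2 * t := by
    intro i
    have h0 : ((m i - b i : ℤ) : ZMod 2) = 0 := by
      have ha : ((a i).val : ZMod 2) = a i := by
        rw [ZMod.natCast_val, ZMod.cast_id]
      have h2 : (2 : ZMod 2) = 0 := by decide
      simp only [hm]
      push_cast [hb i, ha, h2]
      ring
    obtain ⟨t, ht⟩ := (ZMod.intCast_zmod_eq_zero_iff_dvd _ 2).mp h0
    refine ⟨t, by push_cast at ht; linarith⟩
  choose k hk using hdvd2
  have hmb : m = b + (2:ℤ) • k := by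
    funext i
    simp only [Pi.add_apply, Pi.smul_apply, smul_eq_mul]
    exact hk i
  have hdvd4 : m ⬝ᵥ S *ᵥ m = b ⬝ᵥ S *ᵥ b + 4 * (b ⬝ᵥ S *ᵥ k + k ⬝ᵥ S *ᵥ k) := by
    rw [hmb]
    simp only [mulVec_add, add_dotProduct, dotProduct_add, mulVec_smul,
      smul_dotProduct, dotProduct_smul, smul_eq_mul]
    rw [hsym k b]
    ring
  have key2 : v ⬝ᵥ (S.map (Int.cast : ℤ → ℂ)) *ᵥ v = ((m ⬝ᵥ S *ᵥ m : ℤ) : ℂ) / 4 := by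
    simp only [dotProduct, mulVec, map_apply, hv2]
    push_cast
    simp only [Finset.mul_sum, Finset.sum_div]
    refine Finset.sum_congr rfl fun i _ => ?_
    refine Finset.sum_congr rfl fun j _ => ?_
    ring
  have key1 : v ⬝ᵥ ((2:ℂ) • (τ + S.map (Int.cast : ℤ → ℂ))) *ᵥ v
      = v ⬝ᵥ ((2:ℂ) • τ) *ᵥ v + 2 * (v ⬝ᵥ (S.map (Int.cast : ℤ → ℂ)) *ᵥ v) := by
    rw [smul_add, add_mulVec, dotProduct_add]
    simp only [smul_mulVec, dotProduct_smul, smul_eq_mul]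
  have hpow : Complex.I ^ (m ⬝ᵥ S *ᵥ m) = Complex.I ^ (b ⬝ᵥ S *ᵥ b) := by
    rw [hdvd4, zpow_add₀ Complex.I_ne_zero, _root_.zpow_mul]
    have h4 : Complex.I ^ (4:ℤ) = 1 := by
      rw [show ((4:ℤ)) = ((4:ℕ):ℤ) from rfl, zpow_natCast, Complex.I_pow_four]
    rw [h4, _root_.one_zpow, mul_one]
  have hsplit : (2 * (Real.pi:ℂ) * Complex.I) * ((v ⬝ᵥ ((2:ℂ) • τ) *ᵥ v
        + 2 * (((m ⬝ᵥ S *ᵥ m : ℤ) : ℂ) / 4)) / 2)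
      = (2 * (Real.pi:ℂ) * Complex.I) * ((v ⬝ᵥ ((2:ℂ) • τ) *ᵥ v) / 2)
        + ((m ⬝ᵥ S *ᵥ m : ℤ) : ℂ) * (((Real.pi/2 : ℝ):ℂ) * Complex.I) := by
    push_cast
    ring
  rw [key1, key2, hsplit, Complex.exp_add, Complex.exp_int_mul, hexpI, hpow, mul_comm]
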